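/- Let N ≥ 1 be an integer, let ℏ > 0 be real, let λ₁, …, λ_N be real numbers with λ_i − λ_j ∉ ℏℤ for all i ≠ j, and let x < 0 be real. Then the double series ∑_{i=1}^{N} ∑_{n=0}^{∞} (1/(n! ℏ^n)) · exp(−(x/ℏ)(λ_i − nℏ)) · ∏_{j ≠ i} |Γ₁(λ_i − λ_j − nℏ | ℏ)| converges (i.e., the residue expansion of the one-variable Mellin–Barnes integral converges absolutely). -/

import Mathlib

/-!
The prefactor `1 / (n! ℏⁿ) · exp(-(x/ℏ)(λ - nℏ))` gains a factor `eˣ / ((n+1) ℏ)` from `n` to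
`n + 1`, while the functional equation `Γ₁(z|ℏ) = (z - ℏ) Γ₁(z - ℏ|ℏ)` shows that each factor
`|Γ₁(λ_i - λ_j - nℏ|ℏ)|` is eventually non-increasing in `n`. So the terms of each inner series
eventually shrink by a factor `O(1/n)`, and the ratio test applies; the outer sum is finite. -/

/-- The function `Γ₁(z|ℏ) = ℏ^{z/ℏ} Γ(z/ℏ)` of the paper. -/
noncomputable def Γ₁ (z : ℂ) (ℏ : ℝ) : ℂ :=
  (ℏ : ℂ) ^ (z / ℏ) * Complex.Gamma (z / ℏ)

open Filter

theorem summable_of_norm_succ_le_div_mul {E : Type*} [NormedAddCommGroup E] [CompleteSpace E]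
    {f : ℕ → E} (C : ℝ) (h : ∀ᶠ n : ℕ in atTop, ‖f (n + 1)‖ ≤ C / (n + 1) * ‖f n‖) :
    Summable f := by
  refine summable_of_ratio_norm_eventually_le (r := 1 / 2) (by norm_num) ?_
  have hsmall : ∀ᶠ n : ℕ in atTop, C / ((n : ℝ) + 1) ≤ 1 / 2 :=
    (tendsto_const_div_atTop_nhds_zero_nat C |>.comp (tendsto_add_atTop_nat 1)).eventually
      (ge_mem_nhds (show (0 : ℝ) < 1 / 2 by norm_num)) |>.mono fun n hn => by simpa using hn
  filter_upwards [h, hsmall] with n hn hCn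
  exact hn.trans (mul_le_mul_of_nonneg_right hCn (norm_nonneg _))

section Γ₁

variable {ℏ : ℝ}

theorem Γ₁_eq_mul_Γ₁_sub (hℏ : ℏ ≠ 0) {z : ℂ} (hz : z - ℏ ≠ 0) :
    Γ₁ z ℏ = (z - ℏ) * Γ₁ (z - ℏ) ℏ := by
  have hℏ' : (ℏ : ℂ) ≠ 0 := by exact_mod_cast hℏ
  have hs : z / ℏ - 1 ≠ 0 := by
    rwa [div_sub_one hℏ', div_ne_zero_iff, and_iff_left hℏ']
  have hGamma : Complex.Gamma (z / ℏ) = (z / ℏ - 1) * Complex.Gamma (z / ℏ - 1) := by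
    simpa using Complex.Gamma_add_one _ hs
  rw [Γ₁, Γ₁, sub_div, div_self hℏ', hGamma, Complex.cpow_sub _ _ hℏ', Complex.cpow_one]
  field_simp

theorem norm_Γ₁_sub_le (hℏ : ℏ ≠ 0) {z : ℂ} (hz : 1 ≤ ‖z - ℏ‖) :
    ‖Γ₁ (z - ℏ) ℏ‖ ≤ ‖Γ₁ z ℏ‖ := by
  have hz₀ : z - ℏ ≠ 0 := norm_pos_iff.mp (zero_lt_one.trans_le hz)
  rw [Γ₁_eq_mul_Γ₁_sub hℏ hz₀, norm_mul]
  exact le_mul_of_one_le_left (norm_nonneg _) hz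

theorem eventually_norm_Γ₁_sub_succ_mul_le (hℏ : 0 < ℏ) (a : ℂ) :
    ∀ᶠ n : ℕ in atTop, ‖Γ₁ (a - ((n + 1 : ℕ) : ℂ) * ℏ) ℏ‖ ≤ ‖Γ₁ (a - (n : ℂ) * ℏ) ℏ‖ := by
  have hgrow : Tendsto (fun n : ℕ => ((n : ℝ) + 1) * ℏ) atTop atTop :=
    (tendsto_atTop_add_const_right _ 1 tendsto_natCast_atTop_atTop).atTop_mul_const hℏ
  filter_upwards [hgrow.eventually_ge_atTop (‖a‖ + 1)] with n hn
  have hshift : a - ((n + 1 : ℕ) : ℂ) * ℏ = a - (n : ℂ) * ℏ - ℏ := by push_cast; ring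
  rw [hshift]
  refine norm_Γ₁_sub_le hℏ.ne' ?_
  calc (1 : ℝ) ≤ ((n : ℝ) + 1) * ℏ - ‖a‖ := by linarith
    _ = ‖((((n : ℝ) + 1) * ℏ : ℝ) : ℂ)‖ - ‖a‖ := by
        rw [Complex.norm_real, Real.norm_of_nonneg (by positivity)]
    _ ≤ ‖a - (n : ℂ) * ℏ - ℏ‖ := by
        rw [show a - (n : ℂ) * ℏ - ℏ = a - ((((n : ℝ) + 1) * ℏ : ℝ) : ℂ) by push_cast; ring,
          norm_sub_rev]
        exact norm_sub_norm_le _ _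

end Γ₁

theorem residue_prefactor_succ {ℏ : ℝ} (hℏ : ℏ ≠ 0) (x l : ℝ) (n : ℕ) :
    1 / (((n + 1).factorial : ℝ) * ℏ ^ (n + 1)) * Real.exp (-(x / ℏ) * (l - ((n + 1 : ℕ) : ℝ) * ℏ))
      = Real.exp x / ℏ / ((n : ℝ) + 1) *
        (1 / ((n.factorial : ℝ) * ℏ ^ n) * Real.exp (-(x / ℏ) * (l - (n : ℝ) * ℏ))) := by
  have hexp : Real.exp (-(x / ℏ) * (l - ((n + 1 : ℕ) : ℝ) * ℏ))
      = Real.exp x * Real.exp (-(x / ℏ) * (l - (n : ℝ) * ℏ)) := by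
    rw [← Real.exp_add]
    congr 1
    push_cast
    field_simp
    ring
  rw [hexp, Nat.factorial_succ]
  push_cast
  field_simp
  ring

theorem mellinBarnes_residue_expansion_summable_general
    (N : ℕ) (ℏ : ℝ) (hℏ : 0 < ℏ) (lam : Fin N → ℝ)
    (x : ℝ) :
    Summable (fun p : Fin N × ℕ =>
      (1 / ((p.2.factorial : ℝ) * ℏ ^ p.2)) *
        Real.exp (-(x / ℏ) * (lam p.1 - (p.2 : ℝ) * ℏ)) *
        ∏ j ∈ Finset.univ.erase p.1,
          ‖Γ₁ ((lam p.1 : ℂ) - (lam j : ℂ) - (p.2 : ℂ) * (ℏ : ℂ)) ℏ‖) := by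
  refine (summable_prod_of_nonneg fun p => by positivity).mpr ⟨fun i => ?_, .of_finite⟩
  refine summable_of_norm_succ_le_div_mul (Real.exp x / ℏ) ?_
  have hGamma := (eventually_all_finset _).mpr fun j (_ : j ∈ Finset.univ.erase i) =>
    eventually_norm_Γ₁_sub_succ_mul_le hℏ ((lam i : ℂ) - lam j)
  filter_upwards [hGamma] with n hn
  rw [Real.norm_of_nonneg (by positivity), Real.norm_of_nonneg (by positivity),
    residue_prefactor_succ hℏ.ne', mul_assoc _ _ (∏ j ∈ _, _)]
  gcongr with j hj
  exact hn j hj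

/-- absolute convergence of the residue expansion of the
one-variable Mellin–Barnes integral (proof of Theorem 1.2 of the paper):
for `x < 0` the double series
`∑_{i=1}^N ∑_{n≥0} (1/(n! ℏ^n)) exp(−(x/ℏ)(λ_i−nℏ)) ∏_{j≠i} |Γ₁(λ_i−λ_j−nℏ|ℏ)|`
converges. -/
theorem mellinBarnes_residue_expansion_summable
    (N : ℕ) (hN : 1 ≤ N) (ℏ : ℝ) (hℏ : 0 < ℏ) (lam : Fin N → ℝ)
    (hlam : ∀ i j, i ≠ j → ∀ n : ℤ, lam i - lam j ≠ ℏ * n)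
    (x : ℝ) (hx : x < 0) :
    Summable (fun p : Fin N × ℕ =>
      (1 / ((p.2.factorial : ℝ) * ℏ ^ p.2)) *
        Real.exp (-(x / ℏ) * (lam p.1 - (p.2 : ℝ) * ℏ)) *
        ∏ j ∈ Finset.univ.erase p.1,
          ‖Γ₁ ((lam p.1 : ℂ) - (lam j : ℂ) - (p.2 : ℂ) * (ℏ : ℂ)) ℏ‖) :=
  mellinBarnes_residue_expansion_summable_general N ℏ hℏ lam x
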